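/- Let n ≥ 2, 0 < α ≤ β, let f_1, …, f_n : ℝ → ℝ and g : ℝ → ℝ each belong to the class F(α,β). Then for every x ∈ ℝⁿ with x_i ≥ 0 for all i and ∑_{i=1}^n x_i = n, the expected change of the total cost under a replacement (departure of a uniformly chosen agent followed by the arrival of a new agent with cost g and initial estimate 1) satisfies (1/n)·∑_{ℓ=1}^n ( ∑_{i ≠ ℓ} f_i( (1 − 1/n)·x_i + (1/n)·x_ℓ ) + g(1) ) − ∑_{i=1}^n f_i(x_i) ≤ (5/2)β − (3/2)α. -/

import Mathlib

/-- The class `F(α,β)`: differentiable, `α`-strongly convex (`x ↦ f x - (α/2)x²`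
is convex), `β`-smooth (the derivative is `β`-Lipschitz), with `f(0) = 0` and
`f'(0) = 0`. -/
def MemF (α β : ℝ) (f : ℝ → ℝ) : Prop :=
  Differentiable ℝ f ∧
  ConvexOn ℝ Set.univ (fun x => f x - α / 2 * x ^ 2) ∧
  (∀ x y : ℝ, |deriv f x - deriv f y| ≤ β * |x - y|) ∧
  f 0 = 0 ∧ deriv f 0 = 0

/-! The post-departure estimate of agent `i` is `x_i + (x_ℓ - x_i)/n`, so `β`-smoothness bounds its
cost by the quadratic model of `f_i` at `x_i`. On `S_n` all coordinates lie in `[0, n]`, whence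
`(x_ℓ - x_i)² ≤ n (x_ℓ + x_i)`, and averaging over the departing agent `ℓ` leaves only terms linear
in `x_i`, except for `f_i'(x_i)(1 - x_i) - f_i(x_i)`. Since `f_i(0) = f_i'(0) = 0`, the bounds
`f_i'(x_i) ≤ β x_i`, `f_i'(x_i) x_i ≥ α x_i²` and `f_i(x_i) ≥ α x_i² / 2` reduce that to
`β x_i - (3α/2) x_i² ≤ β x_i - (3α/2)(2 x_i - 1)`. Summing with `∑ x_i = n` and adding
`g(1) ≤ β/2` gives `(5/2)β - (3/2)α`. -/

open Finset

theorem ConvexOn.add_mul_sub_le_of_hasDerivAt {S : Set ℝ} {h : ℝ → ℝ} {h' a b : ℝ}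
    (hc : ConvexOn ℝ S h) (ha : a ∈ S) (hb : b ∈ S) (hd : HasDerivAt h h' a) :
    h a + h' * (b - a) ≤ h b := by
  rcases lt_trichotomy a b with hab | rfl | hba
  · have := hc.le_slope_of_hasDerivAt ha hb hab hd
    rw [slope_def_field, le_div_iff₀ (sub_pos.2 hab)] at this
    linarith
  · simp
  · have := hc.slope_le_of_hasDerivAt hb ha hba hd
    rw [slope_def_field, div_le_iff₀ (sub_pos.2 hba)] at this
    linarith

theorem ConvexOn.add_deriv_mul_sub_add_sq_le {α : ℝ} {f : ℝ → ℝ}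
    (hc : ConvexOn ℝ Set.univ (fun x => f x - α / 2 * x ^ 2)) {a : ℝ}
    (hd : DifferentiableAt ℝ f a) (b : ℝ) :
    f a + deriv f a * (b - a) + α / 2 * (b - a) ^ 2 ≤ f b := by
  have := hc.add_mul_sub_le_of_hasDerivAt (Set.mem_univ a) (Set.mem_univ b)
    (hd.hasDerivAt.sub ((hasDerivAt_pow 2 a).const_mul (α / 2)))
  norm_num at this
  linarith

theorem le_add_deriv_mul_sub_add_sq_of_lipschitz_deriv {β : ℝ} {f : ℝ → ℝ}
    (hd : Differentiable ℝ f) (hlip : ∀ x y, |deriv f x - deriv f y| ≤ β * |x - y|) (a b : ℝ) :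
    f b ≤ f a + deriv f a * (b - a) + β / 2 * (b - a) ^ 2 := by
  have hder : ∀ y, HasDerivAt (fun z => β / 2 * z ^ 2 - f z) (β * y - deriv f y) y := fun y =>
    (((hasDerivAt_pow 2 y).const_mul (β / 2)).sub (hd y).hasDerivAt).congr_deriv (by
      norm_num; ring)
  have hmono : Monotone (deriv fun z => β / 2 * z ^ 2 - f z) := fun u v huv => by
    have := (abs_le.1 (hlip v u)).2
    rw [abs_of_nonneg (sub_nonneg.2 huv)] at this
    rw [(hder u).deriv, (hder v).deriv]
    linarith
  have hconv := hmono.convexOn_univ_of_deriv fun y => (hder y).differentiableAt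
  have := hconv.add_mul_sub_le_of_hasDerivAt (Set.mem_univ a) (Set.mem_univ b) (hder a)
  nlinarith

theorem sub_sq_le_mul_add {a b M : ℝ} (ha : 0 ≤ a) (haM : a ≤ M) (hb : 0 ≤ b) (hbM : b ≤ M) :
    (a - b) ^ 2 ≤ M * (a + b) := by
  rcases le_total a b with h | h <;> nlinarith

namespace MemF

variable {α β : ℝ} {f : ℝ → ℝ}

theorem add_deriv_mul_sub_add_sq_le (hf : MemF α β f) (a b : ℝ) :
    f a + deriv f a * (b - a) + α / 2 * (b - a) ^ 2 ≤ f b :=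
  hf.2.1.add_deriv_mul_sub_add_sq_le (hf.1 a) b

theorem le_add_deriv_mul_sub_add_sq (hf : MemF α β f) (a b : ℝ) :
    f b ≤ f a + deriv f a * (b - a) + β / 2 * (b - a) ^ 2 :=
  le_add_deriv_mul_sub_add_sq_of_lipschitz_deriv hf.1 hf.2.2.1 a b

theorem abs_deriv_le (hf : MemF α β f) (x : ℝ) : |deriv f x| ≤ β * |x| := by
  simpa [hf.2.2.2.2] using hf.2.2.1 x 0

theorem half_mul_sq_le (hf : MemF α β f) (x : ℝ) : α / 2 * x ^ 2 ≤ f x := by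
  simpa [hf.2.2.2.1, hf.2.2.2.2] using hf.add_deriv_mul_sub_add_sq_le 0 x

theorem le_half_mul_sq (hf : MemF α β f) (x : ℝ) : f x ≤ β / 2 * x ^ 2 := by
  simpa [hf.2.2.2.1, hf.2.2.2.2] using hf.le_add_deriv_mul_sub_add_sq 0 x

theorem mul_sq_le_deriv_mul (hf : MemF α β f) (x : ℝ) : α * x ^ 2 ≤ deriv f x * x := by
  have h₁ := hf.add_deriv_mul_sub_add_sq_le x 0
  have h₂ := hf.add_deriv_mul_sub_add_sq_le 0 x
  simp only [hf.2.2.2.1, hf.2.2.2.2] at h₁ h₂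
  linarith

theorem deriv_mul_one_sub_sub_le (hf : MemF α β f) {c : ℝ} (hc : 0 ≤ c) :
    deriv f c * (1 - c) - f c ≤ β * c - 3 * α / 2 * c ^ 2 := by
  have h₁ := (abs_le.1 (hf.abs_deriv_le c)).2
  rw [abs_of_nonneg hc] at h₁
  linarith [hf.mul_sq_le_deriv_mul c, hf.half_mul_sq_le c]

theorem mean_departure_update_sub_le (hf : MemF α β f) (hα : 0 ≤ α) (hβ : 0 ≤ β)
    {ι : Type*} [Fintype ι] [Nonempty ι] {x : ι → ℝ} (hx : ∀ i, 0 ≤ x i)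
    (hsum : ∑ i, x i = (Fintype.card ι : ℝ)) {c : ℝ} (hc : 0 ≤ c)
    (hcN : c ≤ (Fintype.card ι : ℝ)) :
    1 / (Fintype.card ι : ℝ) *
        ∑ ℓ, f ((1 - 1 / (Fintype.card ι : ℝ)) * c + 1 / (Fintype.card ι : ℝ) * x ℓ)
      - (1 + 1 / (Fintype.card ι : ℝ)) * f c
      ≤ (β * (1 + 3 * c) + 3 * α * (1 - 2 * c)) / (2 * Fintype.card ι) := by
  set N : ℝ := (Fintype.card ι : ℝ)
  have hN : 0 < N := by simpa [N] using Fintype.card_pos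
  have hxN : ∀ ℓ, x ℓ ≤ N := fun ℓ =>
    hsum ▸ single_le_sum (fun j _ => hx j) (mem_univ ℓ)
  have hupdate : ∀ ℓ, f ((1 - 1 / N) * c + 1 / N * x ℓ)
      ≤ f c + deriv f c * (x ℓ - c) / N + β / 2 * (x ℓ + c) / N := fun ℓ => by
    have hsmooth := hf.le_add_deriv_mul_sub_add_sq c ((1 - 1 / N) * c + 1 / N * x ℓ)
    rw [show (1 - 1 / N) * c + 1 / N * x ℓ - c = (x ℓ - c) / N by field_simp; ring] at hsmooth
    have hsq : ((x ℓ - c) / N) ^ 2 ≤ (x ℓ + c) / N := by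
      rw [div_pow, div_le_div_iff₀ (by positivity) hN]
      nlinarith [sub_sq_le_mul_add (hx ℓ) (hxN ℓ) hc hcN]
    calc _ ≤ _ := hsmooth
      _ ≤ f c + deriv f c * ((x ℓ - c) / N) + β / 2 * ((x ℓ + c) / N) := by gcongr
      _ = _ := by ring
  have hsum_terms : ∑ ℓ, (f c + deriv f c * (x ℓ - c) / N + β / 2 * (x ℓ + c) / N)
      = N * f c + deriv f c * (1 - c) + β / 2 * (1 + c) := by
    simp only [sum_add_distrib, ← sum_div, ← mul_sum, sum_sub_distrib,
      sum_const, card_univ, hsum, nsmul_eq_mul]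
    field_simp
    ring
  calc 1 / N * ∑ ℓ, f ((1 - 1 / N) * c + 1 / N * x ℓ) - (1 + 1 / N) * f c
      ≤ 1 / N * (N * f c + deriv f c * (1 - c) + β / 2 * (1 + c)) - (1 + 1 / N) * f c := by
        rw [← hsum_terms]; gcongr with ℓ; exact hupdate ℓ
    _ = (deriv f c * (1 - c) - f c + β / 2 * (1 + c)) / N := by field_simp; ring
    _ ≤ (β * c - 3 * α / 2 * c ^ 2 + β / 2 * (1 + c)) / N := by
        gcongr (?_ + _) / _; exact hf.deriv_mul_one_sub_sub_le hc
    _ ≤ (β * (1 + 3 * c) + 3 * α * (1 - 2 * c)) / (2 * N) := by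
        rw [div_le_div_iff₀ hN (by positivity)]
        nlinarith [mul_nonneg hα (sq_nonneg (c - 1))]

end MemF

/-- For local costs in `F(α,β)` and feasible `x ∈ Sₙ`, the
expected change of the total cost under a replacement (uniform departure plus
arrival of a new agent with cost `g` and initial estimate `1`) is at most
`(5/2)β - (3/2)α`. -/
theorem stmt_12 (n : ℕ) (hn : 2 ≤ n) (α β : ℝ) (hα : 0 < α) (hαβ : α ≤ β)
    (f : Fin n → ℝ → ℝ) (hf : ∀ i, MemF α β (f i))
    (g : ℝ → ℝ) (hg : MemF α β g)
    (x : Fin n → ℝ) (hx : ∀ i, 0 ≤ x i) (hsum : ∑ i, x i = (n : ℝ)) :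
    (1 / (n : ℝ)) * (∑ ℓ, ((∑ i ∈ Finset.univ.erase ℓ,
        f i ((1 - 1 / (n : ℝ)) * x i + (1 / (n : ℝ)) * x ℓ)) + g 1))
      - ∑ i, f i (x i)
      ≤ 5 / 2 * β - 3 / 2 * α := by
  have : NeZero n := ⟨by omega⟩
  set N : ℝ := (n : ℝ)
  have hN : 0 < N := by positivity
  have hxN : ∀ i, x i ≤ N := fun i =>
    hsum ▸ single_le_sum (fun j _ => hx j) (mem_univ i)
  have hagent := fun i => (hf i).mean_departure_update_sub_le hα.le (hα.le.trans hαβ) hx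
    (by simpa using hsum) (hx i) (by simpa using hxN i)
  simp only [Fintype.card_fin] at hagent
  have herase : ∀ ℓ, ∑ i ∈ univ.erase ℓ, f i ((1 - 1 / N) * x i + 1 / N * x ℓ)
      = ∑ i, f i ((1 - 1 / N) * x i + 1 / N * x ℓ) - f ℓ (x ℓ) := fun ℓ => by
    rw [sum_erase_eq_sub (mem_univ ℓ), ← add_mul, sub_add_cancel, one_mul]
  -- charge agent `i` its averaged updated cost, its current cost, and `1/n` of its own departure
  calc _ = ∑ i, (1 / N * ∑ ℓ, f i ((1 - 1 / N) * x i + 1 / N * x ℓ) - (1 + 1 / N) * f i (x i))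
        + g 1 := by
        simp only [herase, sum_add_distrib, sum_sub_distrib, sum_const,
          card_univ, Fintype.card_fin, nsmul_eq_mul, ← mul_sum]
        rw [sum_comm]
        field_simp
        ring
    _ ≤ ∑ i, (β * (1 + 3 * x i) + 3 * α * (1 - 2 * x i)) / (2 * N) + β / 2 :=
        add_le_add (sum_le_sum fun i _ => hagent i) (by simpa using hg.le_half_mul_sq 1)
    _ = 5 / 2 * β - 3 / 2 * α := by
        simp only [← sum_div, sum_add_distrib, ← mul_sum, sum_sub_distrib,
          sum_const, card_univ, Fintype.card_fin, nsmul_eq_mul, hsum]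
        field_simp
        ring
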